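/- arXiv:1503.01181 — 8 statements merged into one kernel-verified Lean document; each statement's English description precedes it below -/
import Mathlib

section
/- Every diffeomorphism of V that preserves the canonical Liouville form θ⁰ is a linear symplectic automorphism, and conversely every linear symplectic automorphism preserves θ⁰; that is, Aut(V, θ⁰) = Sp(V, Ω). Concretely: a diffeomorphism g: V → V satisfies Ω(g(z), Dg_z(v)) = Ω(z, v) for all z, v ∈ V if and only if g is linear and lies in Sp(V, Ω). -/
/-!
Differentiating `Ω(g z, Dg_z v) = Ω(z, v)` in `z` and using the symmetry of `D²g` shows that every
differential `Dg_z` is symplectic, hence invertible. Nondegeneracy then turns the hypothesis into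
the Euler relation `Dg_z z = g z`, which makes `s ↦ s⁻¹ g(s z)` constant on `(0, ∞)`. So `g` is
positively homogeneous of degree one, and a map that is positively homogeneous and differentiable
at `0` coincides with its differential there.
-/

open Function

theorem LinearMap.SeparatingLeft.injective_of_forall_apply_eq {R M : Type*} [CommRing R]
    [AddCommGroup M] [Module R M] {Ω : M →ₗ[R] M →ₗ[R] R} (hΩ : Ω.SeparatingLeft) {f : M → M}
    (hf : ∀ x y, Ω (f x) (f y) = Ω x y) : Injective f := by
  intro x x' hxx'
  refine sub_eq_zero.mp (hΩ _ fun y => ?_)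
  rw [map_sub, LinearMap.sub_apply, ← hf x, ← hf x', hxx', sub_self]

theorem LinearMap.SeparatingLeft.bijective_of_forall_apply_eq {K M : Type*} [Field K]
    [AddCommGroup M] [Module K M] [FiniteDimensional K M] {Ω : M →ₗ[K] M →ₗ[K] K}
    (hΩ : Ω.SeparatingLeft) {L : M →ₗ[K] M} (hL : ∀ x y, Ω (L x) (L y) = Ω x y) : Bijective L :=
  have hinj := hΩ.injective_of_forall_apply_eq hL
  ⟨hinj, LinearMap.injective_iff_surjective.mp hinj⟩

section Homogeneous

variable {E F : Type*} [NormedAddCommGroup E] [NormedSpace ℝ E] [NormedAddCommGroup F]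
  [NormedSpace ℝ F] {g : E → F}

theorem DifferentiableAt.hasDerivAt_comp_smul_const {z : E} {s : ℝ}
    (hg : DifferentiableAt ℝ g (s • z)) :
    HasDerivAt (fun t : ℝ => g (t • z)) (fderiv ℝ g (s • z) z) s := by
  have hline := (hasDerivAt_id' s).smul_const z
  rw [one_smul] at hline
  exact hg.hasFDerivAt.comp_hasDerivAt s hline

theorem smul_eq_smul_of_fderiv_apply_self (hg : Differentiable ℝ g)
    (heuler : ∀ z, fderiv ℝ g z z = g z) (z : E) {t : ℝ} (ht : 0 < t) :
    g (t • z) = t • g z := by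
  set φ : ℝ → F := fun s => s⁻¹ • g (s • z)
  have hφ : ∀ s : ℝ, 0 < s → HasDerivAt φ 0 s := by
    intro s hs
    have hdir : fderiv ℝ g (s • z) z = s⁻¹ • g (s • z) := by
      rw [← heuler (s • z), map_smul, inv_smul_smul₀ hs.ne']
    have hline := (hg (s • z)).hasDerivAt_comp_smul_const
    rw [hdir] at hline
    have hφ := (hasDerivAt_inv hs.ne').smul hline
    rwa [smul_smul, ← add_smul, sq, mul_inv, add_neg_cancel, zero_smul] at hφ
  have hconst : φ t = φ 1 :=
    isOpen_Ioi.is_const_of_deriv_eq_zero isPreconnected_Ioi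
      (fun s hs => (hφ s hs).differentiableAt.differentiableWithinAt)
      (fun s hs => (hφ s hs).deriv) ht (Set.mem_Ioi.mpr one_pos)
  simp only [φ, inv_one, one_smul] at hconst
  rw [← hconst, smul_inv_smul₀ ht.ne']

theorem fderiv_zero_apply_of_smul_eq_smul (hg : DifferentiableAt ℝ g 0)
    (hhom : ∀ z, ∀ t : ℝ, 0 < t → g (t • z) = t • g z) (z : E) : fderiv ℝ g 0 z = g z := by
  have hg0 : g 0 = 0 := by
    have h := hhom 0 2 two_pos
    rwa [smul_zero, two_smul, left_eq_add] at h
  have hd₁ : HasDerivWithinAt (fun s : ℝ => g (s • z)) (fderiv ℝ g 0 z) (Set.Ici 0) 0 := by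
    rw [← zero_smul ℝ z] at hg
    simpa using hg.hasDerivAt_comp_smul_const.hasDerivWithinAt
  have hd₂ : HasDerivWithinAt (fun s : ℝ => g (s • z)) (g z) (Set.Ici 0) 0 := by
    have hline := (hasDerivAt_id' (0 : ℝ)).smul_const (g z)
    rw [one_smul] at hline
    refine hline.hasDerivWithinAt.congr (fun s hs => ?_) (by simp [hg0])
    rcases (Set.mem_Ici.mp hs).eq_or_lt with rfl | hs
    · simp [hg0]
    · exact hhom z s hs
  exact (uniqueDiffOn_Ici 0 0 Set.self_mem_Ici).eq_deriv _ hd₁ hd₂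

end Homogeneous

section Liouville

variable {E : Type*} [NormedAddCommGroup E] [NormedSpace ℝ E] {B : E →L[ℝ] E →L[ℝ] ℝ} {g : E → E}

/-- `g` preserves the Liouville form `θ_z(v) = ½ B(z, v)`. -/
def PreservesLiouville (B : E →L[ℝ] E →L[ℝ] ℝ) (g : E → E) : Prop :=
  ∀ z v, B (g z) (fderiv ℝ g z v) = B z v

theorem PreservesLiouville.fderiv_apply_fderiv_add_apply_fderiv_fderiv
    (hθ : PreservesLiouville B g) (hg : ContDiff ℝ 2 g) (z u v : E) :
    B (fderiv ℝ g z u) (fderiv ℝ g z v) + B (g z) (fderiv ℝ (fderiv ℝ g) z u v) = B u v := by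
  have hg₁ : Differentiable ℝ g := hg.differentiable (by simp)
  have hg₂ : Differentiable ℝ (fderiv ℝ g) :=
    (hg.fderiv_right (m := 1) le_rfl).differentiable (by simp)
  have hc : HasFDerivAt (fun y => B (g y)) (B.comp (fderiv ℝ g z)) z :=
    B.hasFDerivAt.comp z (hg₁ z).hasFDerivAt
  have hu : HasFDerivAt (fun y => fderiv ℝ g y v)
      ((ContinuousLinearMap.apply ℝ E v).comp (fderiv ℝ (fderiv ℝ g) z)) z :=
    (ContinuousLinearMap.apply ℝ E v).hasFDerivAt.comp z (hg₂ z).hasFDerivAt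
  have hθv : HasFDerivAt (fun y => B (g y) (fderiv ℝ g y v)) (B.flip v) z := by
    rw [show (fun y => B (g y) (fderiv ℝ g y v)) = B.flip v from funext (hθ · v)]
    exact (B.flip v).hasFDerivAt
  simpa [add_comm] using congrArg (· u) ((hc.clm_apply hu).unique hθv)

/-- Swapping `u` and `v`, the second-derivative terms agree by symmetry of `D²g` while all other
terms change sign. -/
theorem PreservesLiouville.fderiv_apply_fderiv (hθ : PreservesLiouville B g)
    (hB : B.toLinearMap₁₂.IsAlt) (hg : ContDiff ℝ 2 g) (z u v : E) :
    B (fderiv ℝ g z u) (fderiv ℝ g z v) = B u v := by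
  have huv := hθ.fderiv_apply_fderiv_add_apply_fderiv_fderiv hg z u v
  have hvu := hθ.fderiv_apply_fderiv_add_apply_fderiv_fderiv hg z v u
  rw [hg.contDiffAt.isSymmSndFDerivAt (by simp) v u] at hvu
  have hB₁ := hB.neg (fderiv ℝ g z u) (fderiv ℝ g z v)
  have hB₂ := hB.neg u v
  simp only [ContinuousLinearMap.toLinearMap₁₂_apply_apply_apply] at hB₁ hB₂
  linarith

theorem PreservesLiouville.fderiv_apply_self [FiniteDimensional ℝ E]
    (hθ : PreservesLiouville B g) (hB : B.toLinearMap₁₂.IsAlt)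
    (hsep : B.toLinearMap₁₂.SeparatingLeft) (hg : ContDiff ℝ 2 g) (z : E) :
    fderiv ℝ g z z = g z := by
  have hL := hθ.fderiv_apply_fderiv hB hg z
  have hsurj : Surjective (fderiv ℝ g z) :=
    (hsep.bijective_of_forall_apply_eq (L := (fderiv ℝ g z : E →ₗ[ℝ] E)) hL).2
  refine (sub_eq_zero.mp (hsep _ fun w => ?_)).symm
  obtain ⟨v, rfl⟩ := hsurj w
  simp [hθ z, hL]

end Liouville

theorem stmt_0_general {V : Type*} [NormedAddCommGroup V] [NormedSpace ℝ V] [FiniteDimensional ℝ V]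
    (Ω : V →ₗ[ℝ] V →ₗ[ℝ] ℝ)
    (hΩalt : ∀ x : V, Ω x x = 0)
    (hΩnd : ∀ x : V, (∀ y : V, Ω x y = 0) → x = 0)
    (g : V → V) (hg : ContDiff ℝ (⊤ : ℕ∞) g) :
    (∀ z v : V, Ω (g z) (fderiv ℝ g z v) = Ω z v) ↔
      (IsLinearMap ℝ g ∧ Function.Bijective g ∧ ∀ x y : V, Ω (g x) (g y) = Ω x y) := by
  let B : V →L[ℝ] V →L[ℝ] ℝ := LinearMap.toContinuousLinearMap
    ((LinearMap.toContinuousLinearMap : (V →ₗ[ℝ] ℝ) ≃ₗ[ℝ] V →L[ℝ] ℝ).toLinearMap ∘ₗ Ω)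
  have hg₂ : ContDiff ℝ 2 g := hg.of_le (by norm_cast)
  constructor
  · intro hθ
    have hθB : PreservesLiouville B g := hθ
    set L : V →ₗ[ℝ] V := (fderiv ℝ g 0 : V →ₗ[ℝ] V)
    have hLg : ⇑L = g :=
      funext <| fderiv_zero_apply_of_smul_eq_smul (hg₂.differentiable (by simp) 0) fun z _ =>
        smul_eq_smul_of_fderiv_apply_self (hg₂.differentiable (by simp))
          (hθB.fderiv_apply_self hΩalt hΩnd hg₂) z
    have hL : ∀ x y, Ω (L x) (L y) = Ω x y := hθB.fderiv_apply_fderiv hΩalt hg₂ 0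
    rw [← hLg]
    exact ⟨L.isLinear, LinearMap.SeparatingLeft.bijective_of_forall_apply_eq hΩnd hL, hL⟩
  · rintro ⟨hlin, -, hsymp⟩ z v
    have hderiv : HasFDerivAt g (LinearMap.toContinuousLinearMap (hlin.mk' g)) z :=
      (LinearMap.toContinuousLinearMap (hlin.mk' g)).hasFDerivAt
    rw [hderiv.fderiv]
    exact hsymp z v

/-- A diffeomorphism `g : V → V` preserves the canonical Liouville form `θ⁰`,
i.e. satisfies `Ω(g(z), Dg_z(v)) = Ω(z, v)` for all `z, v`, if and only if `g` is linear and
lies in `Sp(V, Ω)`; that is, `Aut(V, θ⁰) = Sp(V, Ω)`. -/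
theorem stmt_0 {V : Type*} [NormedAddCommGroup V] [NormedSpace ℝ V] [FiniteDimensional ℝ V]
    (Ω : V →ₗ[ℝ] V →ₗ[ℝ] ℝ)
    (hΩalt : ∀ x : V, Ω x x = 0)
    (hΩnd : ∀ x : V, (∀ y : V, Ω x y = 0) → x = 0)
    (g ginv : V → V) (hg : ContDiff ℝ (⊤ : ℕ∞) g) (hginv : ContDiff ℝ (⊤ : ℕ∞) ginv)
    (hli : Function.LeftInverse ginv g) (hri : Function.RightInverse ginv g) :
    (∀ z v : V, Ω (g z) (fderiv ℝ g z v) = Ω z v) ↔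
      (IsLinearMap ℝ g ∧ Function.Bijective g ∧ ∀ x y : V, Ω (g x) (g y) = Ω x y) :=
  stmt_0_general Ω hΩalt hΩnd g hg
end

section
/- Any smooth map g: V → V (not assumed to be a diffeomorphism) satisfying Ω(g(z), Dg_z(v)) = Ω(z, v) for all z, v ∈ V is linear and lies in Sp(V, Ω). -/
/-!
Differentiating `Ω(g z, Dg_z v) = Ω(z, v)` in a direction `u` and antisymmetrising in `u, v`
(the second derivative is symmetric, `Ω` is alternating) shows that every `Dg_z` preserves `Ω`,
hence is invertible. Then `Ω(g z, Dg_z v) = Ω(Dg_z z, Dg_z v)` for all `v` gives Euler's relation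
`g z = Dg_z z`, so `t⁻¹ • g (t • z)` is constant for `t > 0`, and letting `t → 0⁺` shows
`g z = Dg_0 z`.
-/

open Set Filter Topology

namespace LinearMap

variable {R M : Type*} [CommRing R] [AddCommGroup M] [Module R M] {B : LinearMap.BilinForm R M}

theorem SeparatingLeft.injective_of_isOrthogonal {F : Type*} [FunLike F M M]
    [LinearMapClass F R M M] (hB : B.SeparatingLeft) {f : F} (hf : B.IsOrthogonal f) :
    Function.Injective f :=
  (injective_iff_map_eq_zero f).2 fun x hx ↦ hB x fun y ↦ by rw [← hf, hx, map_zero, zero_apply]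

theorem SeparatingLeft.eq_of_surjective (hB : B.SeparatingLeft) {f : M → M}
    (hf : Function.Surjective f) {x y : M} (h : ∀ v, B x (f v) = B y (f v)) : x = y := by
  refine sub_eq_zero.1 (hB _ fun w ↦ ?_)
  obtain ⟨v, rfl⟩ := hf w
  rw [map_sub, sub_apply, h, sub_self]

end LinearMap

section

variable {𝕜 E F G : Type*} [NontriviallyNormedField 𝕜] [CompleteSpace 𝕜]
  [NormedAddCommGroup E] [NormedSpace 𝕜 E] [FiniteDimensional 𝕜 E]
  [NormedAddCommGroup F] [NormedSpace 𝕜 F] [FiniteDimensional 𝕜 F]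
  [NormedAddCommGroup G] [NormedSpace 𝕜 G]

def LinearMap.toContinuousLinearMap₂ (B : E →ₗ[𝕜] F →ₗ[𝕜] G) : E →L[𝕜] F →L[𝕜] G :=
  (LinearMap.toContinuousLinearMap.toLinearMap ∘ₗ B).toContinuousLinearMap

@[simp]
theorem LinearMap.toContinuousLinearMap₂_apply (B : E →ₗ[𝕜] F →ₗ[𝕜] G) (x : E) (y : F) :
    B.toContinuousLinearMap₂ x y = B x y :=
  rfl

end

section Euler

variable {E F : Type*} [NormedAddCommGroup E] [NormedSpace ℝ E] [NormedAddCommGroup F]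
  [NormedSpace ℝ F] {f : E → F}

theorem hasDerivAt_apply_smul_const {x : E} {s : ℝ} (hf : DifferentiableAt ℝ f (s • x)) :
    HasDerivAt (fun r : ℝ ↦ f (r • x)) (fderiv ℝ f (s • x) x) s := by
  simpa [Function.comp_def] using hf.hasFDerivAt.comp_hasDerivAt s ((hasDerivAt_id s).smul_const x)

theorem smul_apply_of_forall_eq_fderiv_apply_self (hf : Differentiable ℝ f)
    (hEuler : ∀ x, f x = fderiv ℝ f x x) (x : E) {t : ℝ} (ht : 0 < t) :
    f (t • x) = t • f x := by
  -- `r ↦ r⁻¹ • f (r • x)` has derivative `r⁻² • (r • f' - f) = 0`, by Euler's relation at `r • x`.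
  have hconst (s : ℝ) (hs : s ∈ Ioi (0 : ℝ)) :
      HasDerivAt (fun r : ℝ ↦ r⁻¹ • f (r • x)) 0 s := by
    refine ((hasDerivAt_inv (ne_of_gt hs)).smul (hasDerivAt_apply_smul_const (hf _))).congr_deriv ?_
    rw [hEuler (s • x), map_smul, smul_smul, ← add_smul]
    field_simp
    simp
  have := isOpen_Ioi.is_const_of_deriv_eq_zero isPreconnected_Ioi
    (fun s hs ↦ (hconst s hs).differentiableAt.differentiableWithinAt)
    (fun s hs ↦ (hconst s hs).deriv) ht (mem_Ioi.2 one_pos)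
  simp only [inv_one, one_smul] at this
  rw [← this, smul_inv_smul₀ ht.ne']

theorem eq_fderiv_zero_apply_of_forall_eq_fderiv_apply_self (hf : Differentiable ℝ f)
    (hEuler : ∀ x, f x = fderiv ℝ f x x) (x : E) : f x = fderiv ℝ f 0 x := by
  have hderiv := hasDerivAt_apply_smul_const (x := x) (hf ((0 : ℝ) • x))
  rw [zero_smul] at hderiv
  have hslope : slope (fun r : ℝ ↦ f (r • x)) 0 =ᶠ[𝓝[>] 0] fun _ ↦ f x := by
    filter_upwards [self_mem_nhdsWithin] with t ht
    rw [slope_def_module, sub_zero, zero_smul, hEuler 0, map_zero, sub_zero,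
      smul_apply_of_forall_eq_fderiv_apply_self hf hEuler x ht, inv_smul_smul₀ (ne_of_gt ht)]
  exact tendsto_nhds_unique (tendsto_const_nhds.congr' hslope.symm)
    ((hasDerivAt_iff_tendsto_slope.1 hderiv).mono_left (nhdsGT_le_nhdsNE 0))

end Euler

section Symplectic

variable {V : Type*} [NormedAddCommGroup V] [NormedSpace ℝ V] [FiniteDimensional ℝ V]
  {Ω : LinearMap.BilinForm ℝ V} {g : V → V}

-- `g` pulls back the primitive `z ↦ Ω z` of `2 Ω` to itself.
def PreservesLiouvilleForm (Ω : LinearMap.BilinForm ℝ V) (g : V → V) : Prop :=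
  ∀ z v, Ω (g z) (fderiv ℝ g z v) = Ω z v

theorem PreservesLiouvilleForm.apply_fderiv_add_apply_fderiv_fderiv
    (hpres : PreservesLiouvilleForm Ω g) (hg : ContDiff ℝ 2 g) (z u v : V) :
    Ω (fderiv ℝ g z u) (fderiv ℝ g z v) + Ω (g z) (fderiv ℝ (fderiv ℝ g) z u v) = Ω u v := by
  set B := Ω.toContinuousLinearMap₂
  have hG : HasFDerivAt (fderiv ℝ g) (fderiv ℝ (fderiv ℝ g) z) z :=
    ((hg.fderiv_right le_rfl).differentiable one_ne_zero z).hasFDerivAt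
  have hlhs := B.hasFDerivAt_of_bilinear (hg.differentiable two_ne_zero z).hasFDerivAt
    (hG.clm_apply (hasFDerivAt_const v z))
  have hrhs : HasFDerivAt (fun w ↦ B (g w) (fderiv ℝ g w v)) (B.flip v) z := by
    rw [show (fun w ↦ B (g w) (fderiv ℝ g w v)) = B.flip v from funext (hpres · v)]
    exact (B.flip v).hasFDerivAt
  simpa [B, add_comm] using congr($(hlhs.unique hrhs) u)

theorem PreservesLiouvilleForm.isOrthogonal_fderiv (hpres : PreservesLiouvilleForm Ω g)
    (hΩ : Ω.IsAlt) (hg : ContDiff ℝ 2 g) (z : V) :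
    Ω.IsOrthogonal (fderiv ℝ g z) := by
  intro u v
  have huv := hpres.apply_fderiv_add_apply_fderiv_fderiv hg z u v
  have hvu := hpres.apply_fderiv_add_apply_fderiv_fderiv hg z v u
  rw [(hg.contDiffAt.isSymmSndFDerivAt (by simp)).eq v u, ← hΩ.neg_eq (fderiv ℝ g z u),
    ← hΩ.neg_eq u v] at hvu
  linarith

theorem PreservesLiouvilleForm.eq_fderiv_apply_self (hpres : PreservesLiouvilleForm Ω g)
    (hΩ : Ω.IsAlt) (hΩnd : Ω.SeparatingLeft) (hg : ContDiff ℝ 2 g) (z : V) :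
    g z = fderiv ℝ g z z := by
  have hA := hpres.isOrthogonal_fderiv hΩ hg z
  have hsurj : Function.Surjective (fderiv ℝ g z) :=
    LinearMap.injective_iff_surjective.1 (hΩnd.injective_of_isOrthogonal hA)
  exact hΩnd.eq_of_surjective hsurj fun v ↦ (hpres z v).trans (hA z v).symm

end Symplectic

/-- Any smooth map `g : V → V` (not assumed to be a diffeomorphism) satisfying
`Ω(g(z), Dg_z(v)) = Ω(z, v)` for all `z, v ∈ V` is linear and lies in `Sp(V, Ω)`. -/
theorem stmt_1 {V : Type*} [NormedAddCommGroup V] [NormedSpace ℝ V] [FiniteDimensional ℝ V]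
    (Ω : V →ₗ[ℝ] V →ₗ[ℝ] ℝ)
    (hΩalt : ∀ x : V, Ω x x = 0)
    (hΩnd : ∀ x : V, (∀ y : V, Ω x y = 0) → x = 0)
    (g : V → V) (hg : ContDiff ℝ (⊤ : ℕ∞) g)
    (hpres : ∀ z v : V, Ω (g z) (fderiv ℝ g z v) = Ω z v) :
    IsLinearMap ℝ g ∧ Function.Bijective g ∧ ∀ x y : V, Ω (g x) (g y) = Ω x y := by
  have hL : PreservesLiouvilleForm Ω g := hpres
  have hg2 : ContDiff ℝ 2 g := hg.of_le (by norm_cast)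
  have hgA : ⇑(fderiv ℝ g 0) = g := funext fun x ↦
    (eq_fderiv_zero_apply_of_forall_eq_fderiv_apply_self (hg2.differentiable two_ne_zero)
      (hL.eq_fderiv_apply_self hΩalt hΩnd hg2) x).symm
  have hA := hL.isOrthogonal_fderiv hΩalt hg2 0
  have hinj := LinearMap.SeparatingLeft.injective_of_isOrthogonal hΩnd hA
  rw [← hgA]
  exact ⟨(fderiv ℝ g 0).toLinearMap.isLinear,
    ⟨hinj, LinearMap.injective_iff_surjective.1 hinj⟩, hA⟩
end

section
/- The canonical Liouville form is the unique Sp(V,Ω)-invariant Liouville form on V. Concretely: if V ≠ {0} and ψ: V → ℝ is a smooth function such that for every g ∈ Sp(V, Ω) the function ψ ∘ g − ψ is constant on V, then ψ itself is constant (so dψ = 0 and θ⁰ + dψ = θ⁰). -/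
/-!
A symplectic transvection `x ↦ x + s Ω(u, x) u` fixes `0`, so invariance of `ψ` up to a constant
under it is genuine invariance: `ψ` is constant along the lines `z + ℝ u` through every `z` with
`Ω(u, z) ≠ 0`. For `u ≠ 0` these `z` are dense by nondegeneracy, so by continuity `ψ` is invariant
under all translations.
-/

open LinearMap

theorem LinearMap.dense_compl_ker {𝕜 M N : Type*} [NontriviallyNormedField 𝕜]
    [AddCommGroup M] [TopologicalSpace M] [ContinuousAdd M] [Module 𝕜 M] [ContinuousSMul 𝕜 M]
    [AddCommGroup N] [Module 𝕜 N] {f : M →ₗ[𝕜] N} (hf : f ≠ 0) :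
    Dense (ker f : Set M)ᶜ := by
  rw [← interior_eq_empty_iff_dense_compl, ← Set.not_nonempty_iff_eq_empty]
  exact fun h ↦ hf (ker_eq_top.mp ((ker f).eq_top_of_nonempty_interior' h))

theorem LinearMap.IsAlt.transvection_apply_apply {R M : Type*} [CommRing R] [AddCommGroup M]
    [Module R M] {B : M →ₗ[R] M →ₗ[R] R} (H : B.IsAlt) (u : M) (s : R) (x y : M) :
    B (transvection (B u) (s • u) x) (transvection (B u) (s • u) y) = B x y := by
  simp only [transvection.apply, map_add, map_smul, add_apply, smul_apply, smul_eq_mul,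
    H.self_eq_zero, ← H.neg x u]
  ring

theorem map_add_smul_eq_of_symplectic_invariant {K V β : Type*} [Field K] [AddCommGroup V]
    [Module K V] [AddGroup β] {Ω : V →ₗ[K] V →ₗ[K] K} {ψ : V → β} (hΩ : Ω.IsAlt)
    (hinv : ∀ g : V ≃ₗ[K] V, (∀ a b : V, Ω (g a) (g b) = Ω a b) →
      ∃ c : β, ∀ z : V, ψ (g z) - ψ z = c)
    {u z : V} (hz : Ω u z ≠ 0) (t : K) : ψ (z + t • u) = ψ z := by
  set g := LinearEquiv.transvection (f := Ω u) (v := (t / Ω u z) • u) (by simp [hΩ.self_eq_zero])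
  have hgz : g z = z + t • u := by
    rw [LinearEquiv.transvection.apply, smul_smul, mul_div_cancel₀ _ hz]
  obtain ⟨c, hc⟩ := hinv g (hΩ.transvection_apply_apply u _)
  have hc0 : c = 0 := by simpa using (hc 0).symm
  rw [← hgz, ← sub_eq_zero, hc z, hc0]

theorem map_add_eq_of_symplectic_invariant {𝕜 V β : Type*} [NontriviallyNormedField 𝕜]
    [AddCommGroup V] [TopologicalSpace V] [ContinuousAdd V] [Module 𝕜 V] [ContinuousSMul 𝕜 V]
    [AddGroup β] [TopologicalSpace β] [T2Space β] {Ω : V →ₗ[𝕜] V →ₗ[𝕜] 𝕜} {ψ : V → β}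
    (hΩ : Ω.IsAlt) (hΩnd : ∀ x : V, (∀ y : V, Ω x y = 0) → x = 0) (hψ : Continuous ψ)
    (hinv : ∀ g : V ≃ₗ[𝕜] V, (∀ a b : V, Ω (g a) (g b) = Ω a b) →
      ∃ c : β, ∀ z : V, ψ (g z) - ψ z = c)
    (u z : V) : ψ (z + u) = ψ z := by
  rcases eq_or_ne u 0 with rfl | hu
  · rw [add_zero]
  have hΩu : Ω u ≠ 0 := fun h ↦ hu (hΩnd u fun y ↦ by simp [h])
  have htrans : (fun x ↦ ψ (x + u)) = ψ :=
    (hψ.comp (continuous_id.add continuous_const)).ext_on (dense_compl_ker hΩu) hψ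
      fun x hx ↦ by simpa using map_add_smul_eq_of_symplectic_invariant hΩ hinv hx 1
  exact congrFun htrans z

theorem stmt_3_general {V : Type*} [NormedAddCommGroup V] [NormedSpace ℝ V]
    (Ω : V →ₗ[ℝ] V →ₗ[ℝ] ℝ)
    (hΩalt : ∀ x : V, Ω x x = 0)
    (hΩnd : ∀ x : V, (∀ y : V, Ω x y = 0) → x = 0)
    (ψ : V → ℝ) (hψ : ContDiff ℝ (⊤ : ℕ∞) ψ)
    (hinv : ∀ g : V ≃ₗ[ℝ] V, (∀ a b : V, Ω (g a) (g b) = Ω a b) →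
      ∃ c : ℝ, ∀ z : V, ψ (g z) - ψ z = c) :
    ∀ z w : V, ψ z = ψ w := by
  intro z w
  simpa using map_add_eq_of_symplectic_invariant hΩalt hΩnd hψ.continuous hinv (z - w) w

/-- The canonical Liouville form is the unique `Sp(V,Ω)`-invariant Liouville form:
if `V ≠ {0}` and `ψ : V → ℝ` is a smooth function such that for every `g ∈ Sp(V, Ω)` the
function `ψ ∘ g − ψ` is constant on `V`, then `ψ` itself is constant. -/
theorem stmt_3 {V : Type*} [NormedAddCommGroup V] [NormedSpace ℝ V] [FiniteDimensional ℝ V]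
    [Nontrivial V]
    (Ω : V →ₗ[ℝ] V →ₗ[ℝ] ℝ)
    (hΩalt : ∀ x : V, Ω x x = 0)
    (hΩnd : ∀ x : V, (∀ y : V, Ω x y = 0) → x = 0)
    (ψ : V → ℝ) (hψ : ContDiff ℝ (⊤ : ℕ∞) ψ)
    (hinv : ∀ g : V ≃ₗ[ℝ] V, (∀ a b : V, Ω (g a) (g b) = Ω a b) →
      ∃ c : ℝ, ∀ z : V, ψ (g z) - ψ z = c) :
    ∀ z w : V, ψ z = ψ w :=
  stmt_3_general Ω hΩalt hΩnd ψ hψ hinv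
end

section
/- The linear elements of Aut(V, θ^A) are exactly the elements of the centralizer Sp(V, Ω)^A: if g: V → V is a linear bijection satisfying Ω(g(z) − A(g(z)), g(v)) = Ω(z − Az, v) for all z, v ∈ V, then g ∈ Sp(V, Ω) and gA = Ag. -/
/-!
Put `D(a, b) = Ω(g a, g b) − Ω(a, b)`. The hypothesis rewrites `D(a, b)` as
`Ω(A g a, g b) − Ω(A a, b)`, which is symmetric in `a, b` because `A` is `Ω`-skew-adjoint;
but `D` is also antisymmetric, so it vanishes and `g` is symplectic. Feeding this back into
the hypothesis gives `Ω(A g z, g v) = Ω(A z, v) = Ω(g A z, g v)` for all `v`, and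
nondegeneracy together with surjectivity of `g` yields `g A = A g`.
-/

namespace LinearMap

variable {R V : Type*} [CommRing R] [AddCommGroup V] [Module R V]
  {Ω : V →ₗ[R] V →ₗ[R] R} {A g : V →ₗ[R] V}

theorem IsAlt.apply_apply_comm_of_skewAdjoint (hΩ : Ω.IsAlt)
    (hA : ∀ x y, Ω (A x) y + Ω x (A y) = 0) (x y : V) : Ω (A x) y = Ω (A y) x := by
  rw [← hΩ.neg x (A y)]
  exact eq_neg_of_add_eq_zero_left (hA x y)

theorem IsAlt.apply_map_map_of_preserves_sub_comp [NoZeroDivisors R] [CharZero R]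
    (hΩ : Ω.IsAlt) (hA : ∀ x y, Ω (A x) y + Ω x (A y) = 0)
    (hpres : ∀ z v, Ω (g z - A (g z)) (g v) = Ω (z - A z) v) (a b : V) :
    Ω (g a) (g b) = Ω a b := by
  have hD : ∀ a b, Ω (g a) (g b) - Ω a b = Ω (A (g a)) (g b) - Ω (A a) b := fun a b => by
    have h := hpres a b
    simp only [map_sub, sub_apply] at h
    linear_combination h
  have hsymm : Ω (g a) (g b) - Ω a b = Ω (g b) (g a) - Ω b a := by
    rw [hD, hD, hΩ.apply_apply_comm_of_skewAdjoint hA (g a),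
      hΩ.apply_apply_comm_of_skewAdjoint hA a]
  have hanti : Ω (g b) (g a) - Ω b a = -(Ω (g a) (g b) - Ω a b) := by
    rw [← hΩ.neg (g a), ← hΩ.neg a]
    ring
  rw [hanti, CharZero.eq_neg_self_iff, sub_eq_zero] at hsymm
  exact hsymm

theorem SeparatingLeft.map_comp_eq_comp_map_of_preserves_sub_comp (hΩ : Ω.SeparatingLeft)
    (hg : Function.Surjective g) (hsymp : ∀ a b, Ω (g a) (g b) = Ω a b)
    (hpres : ∀ z v, Ω (g z - A (g z)) (g v) = Ω (z - A z) v) (z : V) :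
    g (A z) = A (g z) := by
  refine sub_eq_zero.mp (hΩ _ fun y => ?_)
  obtain ⟨v, rfl⟩ := hg y
  have h := hpres z v
  simp only [map_sub, sub_apply, hsymp] at h ⊢
  linear_combination h

end LinearMap

theorem stmt_5_general {V : Type*} [AddCommGroup V] [Module ℝ V]
    (Ω : V →ₗ[ℝ] V →ₗ[ℝ] ℝ)
    (hΩalt : ∀ x : V, Ω x x = 0)
    (hΩnd : ∀ x : V, (∀ y : V, Ω x y = 0) → x = 0)
    (A : V →ₗ[ℝ] V) (hA : ∀ x y : V, Ω (A x) y + Ω x (A y) = 0)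
    (g : V →ₗ[ℝ] V) (hbij : Function.Bijective g)
    (hpres : ∀ z v : V, Ω (g z - A (g z)) (g v) = Ω (z - A z) v) :
    (∀ a b : V, Ω (g a) (g b) = Ω a b) ∧ ∀ z : V, g (A z) = A (g z) := by
  have hsymp : ∀ a b : V, Ω (g a) (g b) = Ω a b :=
    LinearMap.IsAlt.apply_map_map_of_preserves_sub_comp hΩalt hA hpres
  exact ⟨hsymp, LinearMap.SeparatingLeft.map_comp_eq_comp_map_of_preserves_sub_comp
    hΩnd hbij.2 hsymp hpres⟩

/-- The linear elements of `Aut(V, θ^A)` are exactly the elements of the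
centralizer `Sp(V, Ω)^A`: if `g : V → V` is a linear bijection satisfying
`Ω(g(z) − A(g(z)), g(v)) = Ω(z − Az, v)` for all `z, v ∈ V`, then `g ∈ Sp(V, Ω)`
and `gA = Ag`. -/
theorem stmt_5 {V : Type*} [AddCommGroup V] [Module ℝ V] [FiniteDimensional ℝ V]
    (Ω : V →ₗ[ℝ] V →ₗ[ℝ] ℝ)
    (hΩalt : ∀ x : V, Ω x x = 0)
    (hΩnd : ∀ x : V, (∀ y : V, Ω x y = 0) → x = 0)
    (A : V →ₗ[ℝ] V) (hA : ∀ x y : V, Ω (A x) y + Ω x (A y) = 0)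
    (g : V →ₗ[ℝ] V) (hbij : Function.Bijective g)
    (hpres : ∀ z v : V, Ω (g z - A (g z)) (g v) = Ω (z - A z) v) :
    (∀ a b : V, Ω (g a) (g b) = Ω a b) ∧ ∀ z : V, g (A z) = A (g z) :=
  stmt_5_general Ω hΩalt hΩnd A hA g hbij hpres
end

section
/- Let A: V → V be a linear map with A² = −I on a finite-dimensional real vector space V, and let g: V → V be a smooth map satisfying the flow-equivariance condition g(eᵗ e^{−At} z) = eᵗ e^{−At} g(z) for all t ∈ ℝ and z ∈ V. Then g(0) = 0, g equals its derivative at the origin (so g is linear), and g commutes with A. -/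
/-!
Transporting `exp (s i) = cos s + i sin s` along the algebra map `ℂ → End V`, `i ↦ A`, gives
`exp (s • A) = cos s • 1 + sin s • A`.
At `s = 2π` the flow condition says that `g` commutes with the contraction `z ↦ e^{-2π} z`;
a map differentiable at `0` that commutes with a contraction is linear, because its difference
quotients along the orbit `e^{-2πn} z → 0` are all equal to `g z`. At `s = π/2` the flow condition
then says that `g` commutes with `A`.
-/

open NormedSpace Filter Topology

theorem exp_smul_eq_cos_add_sin {𝔸 : Type*} [NormedRing 𝔸] [NormedAlgebra ℝ 𝔸]
    [CompleteSpace 𝔸] {a : 𝔸} (ha : a * a = -1) (t : ℝ) :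
    exp (t • a) = Real.cos t • 1 + Real.sin t • a := by
  let f := Complex.liftAux a ha
  have hf : Continuous f := f.toLinearMap.continuous_of_finiteDimensional
  have := map_exp_of_mem_ball (𝕂 := ℝ) f hf (t * Complex.I)
    ((expSeries_radius_eq_top ℝ ℂ).symm ▸ edist_lt_top _ _)
  rw [← Complex.exp_eq_exp_ℂ, Complex.exp_mul_I] at this
  simpa [f, ← Complex.ofReal_cos, ← Complex.ofReal_sin, Algebra.algebraMap_eq_smul_one]
    using this.symm

section Homogeneous

variable {𝕜 E F : Type*} [NontriviallyNormedField 𝕜] [NormedAddCommGroup E] [NormedSpace 𝕜 E]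
  [NormedAddCommGroup F] [NormedSpace 𝕜 F] {g : E → F} {c : 𝕜}

theorem map_zero_of_map_smul (hc : c ≠ 1) (h : ∀ z, g (c • z) = c • g z) : g 0 = 0 := by
  have h0 : (1 - c) • g 0 = 0 := by
    rw [sub_smul, one_smul, ← h, smul_zero, sub_self]
  exact (smul_eq_zero.1 h0).resolve_left (sub_ne_zero.2 hc.symm)

theorem map_pow_smul_of_map_smul (h : ∀ z, g (c • z) = c • g z) (n : ℕ) (z : E) :
    g (c ^ n • z) = c ^ n • g z := by
  induction n with
  | zero => simp
  | succ n ih => rw [pow_succ', mul_smul, h, ih, ← mul_smul]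

theorem eq_fderiv_zero_of_map_smul (hc0 : c ≠ 0) (hc1 : ‖c‖ < 1) (hg : DifferentiableAt 𝕜 g 0)
    (h : ∀ z, g (c • z) = c • g z) (z : E) : g z = fderiv 𝕜 g 0 z := by
  have hline : HasDerivAt (fun s : 𝕜 => s • z) z 0 := by
    simpa using (hasDerivAt_id (0 : 𝕜)).smul_const z
  have hderiv : HasDerivAt (fun s : 𝕜 => g (s • z)) (fderiv 𝕜 g 0 z) 0 :=
    (by simpa using hg.hasFDerivAt : HasFDerivAt g (fderiv 𝕜 g 0) ((0 : 𝕜) • z)).comp_hasDerivAt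
      0 hline
  have hpow : Tendsto (c ^ ·) atTop (𝓝[≠] 0) :=
    tendsto_nhdsWithin_iff.2 ⟨tendsto_pow_atTop_nhds_zero_of_norm_lt_one hc1,
      Eventually.of_forall fun n => pow_ne_zero n hc0⟩
  have hg0 : g 0 = 0 := map_zero_of_map_smul (by rintro rfl; simp at hc1) h
  have hslope : ∀ n : ℕ, slope (fun s : 𝕜 => g (s • z)) 0 (c ^ n) = g z := fun n => by
    simp [slope, hg0, map_pow_smul_of_map_smul h, pow_ne_zero n hc0]
  refine tendsto_nhds_unique ?_ ((hasDerivAt_iff_tendsto_slope.1 hderiv).comp hpow)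
  simp [Function.comp_def, hslope]

end Homogeneous

/-- If `A : V → V` is linear with `A² = −I` and the smooth map `g : V → V`
satisfies the flow-equivariance `g(eᵗ e^{−At} z) = eᵗ e^{−At} g(z)` for all `t, z`, then
`g(0) = 0`, `g` equals its derivative at the origin (so `g` is linear), and `g` commutes
with `A`. -/
theorem stmt_9 {V : Type*} [NormedAddCommGroup V] [NormedSpace ℝ V] [FiniteDimensional ℝ V]
    (A : V →L[ℝ] V) (hA2 : ∀ z : V, A (A z) = -z)
    (g : V → V) (hg : ContDiff ℝ (⊤ : ℕ∞) g)
    (hflow : ∀ (t : ℝ) (z : V),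
      g (Real.exp t • (NormedSpace.exp ((-t) • A)) z) =
        Real.exp t • (NormedSpace.exp ((-t) • A)) (g z)) :
    g 0 = 0 ∧ (∀ z : V, g z = fderiv ℝ g 0 z) ∧ ∀ z : V, g (A z) = A (g z) := by
  have hAA : A * A = -1 := ContinuousLinearMap.ext hA2
  have hflow' (s : ℝ) (z : V) :
      g (Real.exp (-s) • exp (s • A) z) = Real.exp (-s) • exp (s • A) (g z) := by
    simpa using hflow (-s) z
  have hscale (z : V) :
      g (Real.exp (-(2 * Real.pi)) • z) = Real.exp (-(2 * Real.pi)) • g z := by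
    simpa [exp_smul_eq_cos_add_sin hAA] using hflow' (2 * Real.pi) z
  have hrot (z : V) :
      g (Real.exp (-(Real.pi / 2)) • A z) = Real.exp (-(Real.pi / 2)) • A (g z) := by
    simpa [exp_smul_eq_cos_add_sin hAA] using hflow' (Real.pi / 2) z
  have hc1 : ‖Real.exp (-(2 * Real.pi))‖ < 1 := by
    rw [Real.norm_eq_abs, abs_of_pos (Real.exp_pos _), Real.exp_lt_one_iff]
    linarith [Real.pi_pos]
  have hlin := eq_fderiv_zero_of_map_smul (Real.exp_pos _).ne' hc1
    (hg.differentiable (by simp) 0) hscale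
  refine ⟨map_zero_of_map_smul (fun h => by simp [h] at hc1) hscale, hlin, fun z => ?_⟩
  refine smul_right_injective V (Real.exp_pos (-(Real.pi / 2))).ne' ?_
  change _ • g (A z) = _ • A (g z)
  rw [← hrot z, hlin (_ • A z), map_smul, ← hlin]
end

section
/- Let A ∈ sp(V, Ω) satisfy A² = +I, with eigenspaces V₊ = ker(A − I), V₋ = ker(A + I) and projection P₊: V → V₊ along V₋. If g: V → V is a smooth diffeomorphism satisfying Ω(g(z) − A(g(z)), Dg_z(v)) = Ω(z − Az, v) for all z, v ∈ V, then g commutes with the projection P₊, i.e. P₊(g(z)) = g(P₊(z)) for all z ∈ V; in particular g maps V₊ into itself. -/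
/-!
The one-form `α_z(v) = Ω(z - Az, v)` has exterior derivative
`dα(u, t) = Ω(u - Au, t) - Ω(t - At, u) = 2 Ω(u, t)`, because `A` is skew for `Ω`. A map `g`
with `g^*α = α` therefore satisfies `g^*Ω = Ω`, so each `Dg_z` is a linear symplectomorphism, and
`g^*α = α` becomes `(I - A) g(z) = Dg_z (I - A) z`; in particular `g(V₊) ⊆ V₊`.
On the segment `p + t d`, with `p ∈ V₊` and `d ∈ V₋`, we have `(I - A)(p + t d) = 2 t d`, so for
`t ≠ 0` the velocity `Dg(d) = (2t)⁻¹ (I - A) g(p + t d)` lies in `V₋ = ker P₊`. By continuity this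
also holds at `t = 0`, so `P₊ ∘ g` is constant on the segment: `P₊ g(z) = P₊ g(P₊ z) = g(P₊ z)`.
-/

section LinearOneForm

variable {E : Type*} [NormedAddCommGroup E] [NormedSpace ℝ E] {β : E →L[ℝ] E →L[ℝ] ℝ} {g : E → E}

theorem apply_fderiv_fderiv_add_apply_fderiv_eq (hg : ContDiff ℝ 2 g)
    (hβ : ∀ z v, β (g z) (fderiv ℝ g z v) = β z v) (z w v : E) :
    β (g z) (fderiv ℝ (fderiv ℝ g) z w v) + β (fderiv ℝ g z w) (fderiv ℝ g z v) = β w v := by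
  have hg' : HasFDerivAt g (fderiv ℝ g z) z := (hg.differentiable (by norm_num) z).hasFDerivAt
  have hDg : HasFDerivAt (fun y => fderiv ℝ g y v) ((fderiv ℝ (fderiv ℝ g) z).flip v) z := by
    have := ((hg.fderiv_right (m := 1) (by norm_num)).differentiable one_ne_zero z).hasFDerivAt
    simpa using this.clm_apply (hasFDerivAt_const v z)
  have hlhs := β.hasFDerivAt_of_bilinear hg' hDg
  rw [show (fun y => β (g y) (fderiv ℝ g y v)) = fun y => β.flip v y from funext (hβ · v)] at hlhs
  simpa using congr($(hlhs.unique (β.flip v).hasFDerivAt) w)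

theorem apply_fderiv_sub_apply_fderiv_eq (hg : ContDiff ℝ 2 g)
    (hβ : ∀ z v, β (g z) (fderiv ℝ g z v) = β z v) (z w v : E) :
    β (fderiv ℝ g z w) (fderiv ℝ g z v) - β (fderiv ℝ g z v) (fderiv ℝ g z w) = β w v - β v w := by
  have hsymm := hg.contDiffAt.isSymmSndFDerivAt (x := z) (by simp) w v
  have hwv := apply_fderiv_fderiv_add_apply_fderiv_eq hg hβ z w v
  have hvw := apply_fderiv_fderiv_add_apply_fderiv_eq hg hβ z v w
  rw [hsymm] at hwv
  linarith

end LinearOneForm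

section Involution

variable {V : Type*} [AddCommGroup V] [Module ℝ V] {A : V →ₗ[ℝ] V}

theorem mem_ker_sub_id_iff {x : V} : x ∈ LinearMap.ker (A - LinearMap.id) ↔ A x = x := by
  simp [sub_eq_zero]

theorem mem_ker_add_id_iff {x : V} : x ∈ LinearMap.ker (A + LinearMap.id) ↔ A x = -x := by
  simp [add_eq_zero_iff_eq_neg]

variable (hA2 : A ∘ₗ A = LinearMap.id)
include hA2

theorem sub_apply_mem_ker_add_id (x : V) : x - A x ∈ LinearMap.ker (A + LinearMap.id) := by
  rw [mem_ker_add_id_iff, map_sub, ← LinearMap.comp_apply, hA2, LinearMap.id_apply, neg_sub]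

theorem add_apply_mem_ker_sub_id (x : V) : x + A x ∈ LinearMap.ker (A - LinearMap.id) := by
  rw [mem_ker_sub_id_iff, map_add, ← LinearMap.comp_apply A A, hA2, LinearMap.id_apply, add_comm]

theorem apply_eq_inv_two_smul_add_apply {P : V →ₗ[ℝ] V}
    (hPp : ∀ x ∈ LinearMap.ker (A - LinearMap.id), P x = x)
    (hPm : ∀ x ∈ LinearMap.ker (A + LinearMap.id), P x = 0) (z : V) :
    P z = (2 : ℝ)⁻¹ • (z + A z) := by
  calc P z = P ((2 : ℝ)⁻¹ • (z + A z) + (2 : ℝ)⁻¹ • (z - A z)) := by congr 1; module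
    _ = (2 : ℝ)⁻¹ • (z + A z) := by
      rw [map_add, map_smul P _ (z - A z), hPm _ (sub_apply_mem_ker_add_id hA2 z), smul_zero,
        add_zero, hPp _ (Submodule.smul_mem _ _ (add_apply_mem_ker_sub_id hA2 z))]

end Involution

section Symplectic

variable {V : Type*} [AddCommGroup V] [Module ℝ V] {Ω : V →ₗ[ℝ] V →ₗ[ℝ] ℝ} {A : V →ₗ[ℝ] V}

theorem LinearMap.IsAlt.apply_sub_sub_apply_sub_eq_two_mul (hΩ : Ω.IsAlt)
    (hA : ∀ x y, Ω (A x) y + Ω x (A y) = 0) (u t : V) :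
    Ω (u - A u) t - Ω (t - A t) u = 2 * Ω u t := by
  have hskew := hA t u
  have htu := hΩ.neg t u
  have htAu := hΩ.neg t (A u)
  simp only [map_sub, LinearMap.sub_apply]
  linarith

theorem LinearMap.SeparatingLeft.surjective_of_apply_apply_eq [FiniteDimensional ℝ V]
    (hΩ : Ω.SeparatingLeft) {L : V →ₗ[ℝ] V} (hL : ∀ w v, Ω (L w) (L v) = Ω w v) :
    Function.Surjective L := by
  refine LinearMap.injective_iff_surjective.mp <|
    (injective_iff_map_eq_zero L).mpr fun w hw => hΩ w fun v => ?_
  rw [← hL, hw, map_zero, LinearMap.zero_apply]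

end Symplectic

section LiouvillePreserving

variable {V : Type*} [NormedAddCommGroup V] [NormedSpace ℝ V] [FiniteDimensional ℝ V]
  {Ω : V →ₗ[ℝ] V →ₗ[ℝ] ℝ} {A : V →ₗ[ℝ] V} {g : V → V}

theorem apply_fderiv_apply_fderiv_eq (hΩ : Ω.IsAlt) (hA : ∀ x y, Ω (A x) y + Ω x (A y) = 0)
    (hg : ContDiff ℝ 2 g) (hpres : ∀ z v, Ω (g z - A (g z)) (fderiv ℝ g z v) = Ω (z - A z) v)
    (z w v : V) : Ω (fderiv ℝ g z w) (fderiv ℝ g z v) = Ω w v := by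
  set β := (Ω ∘ₗ (LinearMap.id - A)).toContinuousBilinearMap
  have hβ : ∀ z v, β (g z) (fderiv ℝ g z v) = β z v := by simpa [β] using hpres
  have h := apply_fderiv_sub_apply_fderiv_eq hg hβ z w v
  simp only [β, LinearMap.toContinuousBilinearMap_apply, LinearMap.comp_apply,
    LinearMap.sub_apply, LinearMap.id_apply, hΩ.apply_sub_sub_apply_sub_eq_two_mul hA] at h
  linarith

theorem sub_apply_eq_fderiv_sub_apply (hΩ : Ω.IsAlt) (hΩnd : Ω.SeparatingLeft)
    (hA : ∀ x y, Ω (A x) y + Ω x (A y) = 0) (hg : ContDiff ℝ 2 g)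
    (hpres : ∀ z v, Ω (g z - A (g z)) (fderiv ℝ g z v) = Ω (z - A z) v) (z : V) :
    g z - A (g z) = fderiv ℝ g z (z - A z) := by
  have hsymp := apply_fderiv_apply_fderiv_eq hΩ hA hg hpres z
  rw [← sub_eq_zero]
  refine hΩnd _ fun y => ?_
  obtain ⟨v, rfl⟩ := hΩnd.surjective_of_apply_apply_eq (L := (fderiv ℝ g z : V →ₗ[ℝ] V)) hsymp y
  rw [map_sub, LinearMap.sub_apply, ContinuousLinearMap.coe_coe, hpres, hsymp, sub_self]

theorem apply_apply_add_eq_of_mem_ker (hA2 : A ∘ₗ A = LinearMap.id) {P : V →ₗ[ℝ] V}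
    (hPm : ∀ x ∈ LinearMap.ker (A + LinearMap.id), P x = 0) (hg : ContDiff ℝ 1 g)
    (hequiv : ∀ z, g z - A (g z) = fderiv ℝ g z (z - A z)) {p d : V}
    (hp : p ∈ LinearMap.ker (A - LinearMap.id)) (hd : d ∈ LinearMap.ker (A + LinearMap.id)) :
    P (g (p + d)) = P (g p) := by
  rw [mem_ker_sub_id_iff] at hp
  rw [mem_ker_add_id_iff] at hd
  have hderiv (t : ℝ) :
      HasDerivAt (fun t : ℝ => P (g (p + t • d))) (P (fderiv ℝ g (p + t • d) d)) t := by
    have hline : HasDerivAt (fun t : ℝ => p + t • d) d t := by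
      simpa using ((hasDerivAt_id t).smul_const d).const_add p
    exact P.toContinuousLinearMap.hasFDerivAt.comp_hasDerivAt t
      ((hg.differentiable one_ne_zero _).hasFDerivAt.comp_hasDerivAt t hline)
  have hvel_ne (t : ℝ) (ht : t ≠ 0) : P (fderiv ℝ g (p + t • d) d) = 0 := by
    have hdt : fderiv ℝ g (p + t • d) d
        = (2 * t)⁻¹ • (g (p + t • d) - A (g (p + t • d))) := by
      rw [hequiv, show p + t • d - A (p + t • d) = (2 * t) • d by
        rw [map_add, map_smul, hp, hd]; module, map_smul, smul_smul,
        inv_mul_cancel₀ (mul_ne_zero two_ne_zero ht), one_smul]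
    rw [hdt, map_smul, hPm _ (sub_apply_mem_ker_add_id hA2 _), smul_zero]
  have hvel_cont : Continuous fun t : ℝ => P (fderiv ℝ g (p + t • d) d) :=
    P.continuous_of_finiteDimensional.comp <| (ContinuousLinearMap.apply ℝ V d).continuous.comp <|
      (hg.continuous_fderiv one_ne_zero).comp (by fun_prop)
  have hvel (t : ℝ) : P (fderiv ℝ g (p + t • d) d) = 0 :=
    congrFun (hvel_cont.ext_on (dense_compl_singleton 0) continuous_const hvel_ne) t
  simpa using is_const_of_deriv_eq_zero (fun t => (hderiv t).differentiableAt)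
    (fun t => (hderiv t).deriv.trans (hvel t)) 1 0

end LiouvillePreserving

theorem stmt_13_general {V : Type*} [NormedAddCommGroup V] [NormedSpace ℝ V] [FiniteDimensional ℝ V]
    (Ω : V →ₗ[ℝ] V →ₗ[ℝ] ℝ)
    (hΩalt : ∀ x : V, Ω x x = 0)
    (hΩnd : ∀ x : V, (∀ y : V, Ω x y = 0) → x = 0)
    (A : V →ₗ[ℝ] V) (hA : ∀ x y : V, Ω (A x) y + Ω x (A y) = 0)
    (hA2 : A ∘ₗ A = LinearMap.id)
    (P : V →ₗ[ℝ] V)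
    (hPp : ∀ x ∈ LinearMap.ker (A - LinearMap.id), P x = x)
    (hPm : ∀ x ∈ LinearMap.ker (A + LinearMap.id), P x = 0)
    (g : V → V) (hg : ContDiff ℝ (⊤ : ℕ∞) g)
    (hpres : ∀ z v : V, Ω (g z - A (g z)) (fderiv ℝ g z v) = Ω (z - A z) v) :
    (∀ z : V, P (g z) = g (P z)) ∧
      ∀ z ∈ LinearMap.ker (A - LinearMap.id), g z ∈ LinearMap.ker (A - LinearMap.id) := by
  have hg2 : ContDiff ℝ 2 g := hg.of_le (WithTop.coe_le_coe.mpr le_top)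
  have hequiv := sub_apply_eq_fderiv_sub_apply hΩalt hΩnd hA hg2 hpres
  have hplus :
      ∀ z ∈ LinearMap.ker (A - LinearMap.id), g z ∈ LinearMap.ker (A - LinearMap.id) := by
    intro z hz
    rw [mem_ker_sub_id_iff] at hz ⊢
    rw [eq_comm, ← sub_eq_zero, hequiv, hz, sub_self, map_zero]
  refine ⟨fun z => ?_, hplus⟩
  have hPz := apply_eq_inv_two_smul_add_apply hA2 hPp hPm z
  have hp : P z ∈ LinearMap.ker (A - LinearMap.id) :=
    hPz ▸ Submodule.smul_mem _ _ (add_apply_mem_ker_sub_id hA2 z)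
  have hd : z - P z ∈ LinearMap.ker (A + LinearMap.id) := by
    rw [show z - P z = (2 : ℝ)⁻¹ • (z - A z) by rw [hPz]; module]
    exact Submodule.smul_mem _ _ (sub_apply_mem_ker_add_id hA2 z)
  calc P (g z) = P (g (P z + (z - P z))) := by rw [add_sub_cancel]
    _ = P (g (P z)) :=
      apply_apply_add_eq_of_mem_ker hA2 hPm (hg2.of_le one_le_two) hequiv hp hd
    _ = g (P z) := hPp _ (hplus _ hp)

/-- Let `A ∈ sp(V, Ω)` satisfy `A² = +I`, with eigenspaces
`V₊ = ker(A − I)`, `V₋ = ker(A + I)` and projection `P₊ : V → V₊` along `V₋`. If the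
smooth diffeomorphism `g` satisfies `Ω(g(z) − A(g(z)), Dg_z(v)) = Ω(z − Az, v)` for all
`z, v`, then `g` commutes with `P₊`; in particular `g` maps `V₊` into itself. -/
theorem stmt_13 {V : Type*} [NormedAddCommGroup V] [NormedSpace ℝ V] [FiniteDimensional ℝ V]
    (Ω : V →ₗ[ℝ] V →ₗ[ℝ] ℝ)
    (hΩalt : ∀ x : V, Ω x x = 0)
    (hΩnd : ∀ x : V, (∀ y : V, Ω x y = 0) → x = 0)
    (A : V →ₗ[ℝ] V) (hA : ∀ x y : V, Ω (A x) y + Ω x (A y) = 0)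
    (hA2 : A ∘ₗ A = LinearMap.id)
    (P : V →ₗ[ℝ] V)
    (hPp : ∀ x ∈ LinearMap.ker (A - LinearMap.id), P x = x)
    (hPm : ∀ x ∈ LinearMap.ker (A + LinearMap.id), P x = 0)
    (g ginv : V → V) (hg : ContDiff ℝ (⊤ : ℕ∞) g) (hginv : ContDiff ℝ (⊤ : ℕ∞) ginv)
    (hli : Function.LeftInverse ginv g) (hri : Function.RightInverse ginv g)
    (hpres : ∀ z v : V, Ω (g z - A (g z)) (fderiv ℝ g z v) = Ω (z - A z) v) :
    (∀ z : V, P (g z) = g (P z)) ∧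
      ∀ z ∈ LinearMap.ker (A - LinearMap.id), g z ∈ LinearMap.ker (A - LinearMap.id) :=
  stmt_13_general Ω hΩalt hΩnd A hA hA2 P hPp hPm g hg hpres
end

section
/- Let A ∈ sp(V, Ω) satisfy A² = +I, with V₊ = ker(A − I), V₋ = ker(A + I), projection P₊: V → V₊ along V₋ and P₋ = I − P₊. If g: V → V is a smooth diffeomorphism satisfying Ω(g(z) − A(g(z)), Dg_z(v)) = Ω(z − Az, v) for all z, v ∈ V, and f := g|_{V₊} : V₊ → V₊ denotes its restriction (which is a diffeomorphism of V₊), then g is recovered from f by the formula g(z) = f(z₊) + [((Df_{z₊} ∘ P₊)†)|_{V₋}]⁻¹(z₋), where z₊ = P₊(z), z₋ = P₋(z), and † denotes the symplectic adjoint. -/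
/-!
Write `Q = 1 - P`, so that `A = P - Q` and `z - A z = 2 Q z`: the hypothesis says that `g`
preserves the 1-form `α_p = Ω (Q p) ·`. Since `dα = Ω`, `g` is symplectic, so every `Dg_p` is
injective, hence bijective, and `α_{g p} ∘ Dg_p = α_p` becomes `Q (g p) = Dg_p (Q p)`: `g`
preserves the Liouville field `p ↦ Q p`. On the segment `c t = P z + t Q z` this reads
`Q (g (c t)) = t (g ∘ c)' t`, so `P ∘ g ∘ c` is constant and `P ∘ g = g ∘ P`. Hence
`g z - f z₊ = Q (g z) ∈ V₋`, differentiating `P ∘ g = g ∘ P` identifies `F_z` with `P ∘ Dg_z`,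
and since `V₋` is isotropic, `Ω (Q (g z)) (P (Dg_z y)) = Ω (Q (g z)) (Dg_z y) = Ω (Q z) y`.
-/

/-- The linear map `F_z = Df_{z₊} ∘ P₊ : V → V`, where `f : V₊ → V₊`, `P₊` is the
projection of `V` onto `V₊` and `z₊ = P₊(z)`. -/
noncomputable def Fmap {V : Type*} [NormedAddCommGroup V] [NormedSpace ℝ V]
    (Vp : Submodule ℝ V) (P : V →ₗ[ℝ] V) (hPr : ∀ z : V, P z ∈ Vp)
    (f : Vp → Vp) (z : V) : V →ₗ[ℝ] V :=
  Vp.subtype ∘ₗ (fderiv ℝ f ⟨P z, hPr z⟩).toLinearMap ∘ₗ P.codRestrict Vp hPr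

section LinearAlgebra

variable {V : Type*} [AddCommGroup V] [Module ℝ V]

theorem apply_eq_proj_add_proj_sub {A P : V →ₗ[ℝ] V} (hA2 : A ∘ₗ A = LinearMap.id)
    (hPp : ∀ x ∈ LinearMap.ker (A - LinearMap.id), P x = x)
    (hPm : ∀ x ∈ LinearMap.ker (A + LinearMap.id), P x = 0) (x : V) :
    A x = P x + P x - x := by
  have hAA : A (A x) = x := LinearMap.congr_fun hA2 x
  have hplus : P x + P (A x) = x + A x := by
    rw [← map_add]; exact hPp _ (by simp [hAA, add_comm])
  have hminus : P x - P (A x) = 0 := by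
    rw [← map_sub]; exact hPm _ (by simp [hAA])
  linear_combination (norm := module) -hplus - hminus

variable {Ω : V →ₗ[ℝ] V →ₗ[ℝ] ℝ} {P : V →ₗ[ℝ] V}

theorem form_proj_add_form_proj {A : V →ₗ[ℝ] V} (hA : ∀ x y, Ω (A x) y + Ω x (A y) = 0)
    (hAP : ∀ x, A x = P x + P x - x) (x y : V) :
    Ω (P x) y + Ω x (P y) = Ω x y := by
  have h := hA x y
  simp only [hAP, map_add, map_sub, LinearMap.add_apply, LinearMap.sub_apply] at h
  linarith

theorem form_sub_proj_sub_proj_eq_zero (hΩP : ∀ x y, Ω (P x) y + Ω x (P y) = Ω x y)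
    (hP : ∀ x, P (P x) = P x) (x y : V) : Ω (x - P x) (y - P y) = 0 := by
  have h := hΩP (x - P x) (y - P y)
  simp only [map_sub, LinearMap.sub_apply, hP, sub_self, LinearMap.zero_apply, map_zero,
    add_zero] at h ⊢
  linarith

theorem form_sub_proj_proj (hΩP : ∀ x y, Ω (P x) y + Ω x (P y) = Ω x y)
    (hP : ∀ x, P (P x) = P x) (x y : V) : Ω (x - P x) (P y) = Ω (x - P x) y := by
  have h := form_sub_proj_sub_proj_eq_zero hΩP hP x y
  rw [map_sub (Ω (x - P x))] at h
  linarith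

theorem form_sub_proj_sub_form_sub_proj (hΩP : ∀ x y, Ω (P x) y + Ω x (P y) = Ω x y)
    (hΩalt : ∀ x, Ω x x = 0) (u v : V) :
    Ω (u - P u) v - Ω (v - P v) u = Ω u v := by
  have hanti : ∀ x y, Ω x y = -Ω y x := fun x y => by
    have h := hΩalt (x + y)
    simp only [map_add, LinearMap.add_apply, hΩalt, zero_add, add_zero] at h
    linarith
  have h := hΩP u v
  simp only [map_sub, LinearMap.sub_apply]
  linarith [hanti (P v) u, hanti v u]

theorem eq_apply_of_form_apply_eq [FiniteDimensional ℝ V]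
    (hΩnd : ∀ x : V, (∀ y : V, Ω x y = 0) → x = 0)
    {T : V →ₗ[ℝ] V} (hT : ∀ u v, Ω (T u) (T v) = Ω u v) {w x : V}
    (h : ∀ v, Ω w (T v) = Ω x v) : w = T x := by
  have hinj : Function.Injective T := by
    refine (injective_iff_map_eq_zero T).2 fun u hu => hΩnd u fun v => ?_
    rw [← hT, hu, map_zero, LinearMap.zero_apply]
  refine sub_eq_zero.1 (hΩnd _ fun y => ?_)
  obtain ⟨v, rfl⟩ := LinearMap.injective_iff_surjective.1 hinj y
  rw [map_sub, LinearMap.sub_apply, h, hT, sub_self]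

end LinearAlgebra

theorem eq_of_hasDerivAt_of_eq_zero_of_ne_zero {E : Type*} [NormedAddCommGroup E]
    [NormedSpace ℝ E] {φ φ' : ℝ → E} (hφ : ∀ t, HasDerivAt φ (φ' t) t) (hφ' : Continuous φ')
    (h : ∀ t ≠ 0, φ' t = 0) (a b : ℝ) : φ a = φ b := by
  have hzero : φ' = 0 := Continuous.ext_on (dense_compl_singleton 0) hφ' continuous_const h
  exact is_const_of_deriv_eq_zero (fun t => (hφ t).differentiableAt)
    (fun t => by rw [(hφ t).deriv, hzero, Pi.zero_apply]) a b

section Calculus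

variable {V : Type*} [NormedAddCommGroup V] [NormedSpace ℝ V]

theorem antisymm_form_fderiv_eq_of_invariant (B : V →L[ℝ] V →L[ℝ] ℝ) (L : V →L[ℝ] V)
    {g : V → V} (hg : ContDiff ℝ 2 g)
    (hinv : ∀ p v, B (L (g p)) (fderiv ℝ g p v) = B (L p) v) (p u v : V) :
    B (L (fderiv ℝ g p u)) (fderiv ℝ g p v) - B (L (fderiv ℝ g p v)) (fderiv ℝ g p u)
      = B (L u) v - B (L v) u := by
  have hg1 : Differentiable ℝ g := hg.differentiable (by norm_num)
  have hDg : Differentiable ℝ (fderiv ℝ g) :=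
    (hg.fderiv_right (m := 1) (by norm_num)).differentiable (by norm_num)
  -- differentiate `hinv` in the direction `u`; the second derivatives cancel by symmetry
  have key : ∀ u v, B (L (fderiv ℝ g p u)) (fderiv ℝ g p v)
      + B (L (g p)) (fderiv ℝ (fderiv ℝ g) p u v) = B (L u) v := by
    intro u v
    have h1 := B.hasFDerivAt_of_bilinear (L.hasFDerivAt.comp p (hg1 p).hasFDerivAt)
      ((hDg p).hasFDerivAt.clm_apply (hasFDerivAt_const v p))
    have h2 : HasFDerivAt (fun q => B (L (g q)) (fderiv ℝ g q v)) ((B.flip v).comp L) p := by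
      simp_rw [hinv]; exact ((B.flip v).comp L).hasFDerivAt
    simpa [add_comm] using congr($(h1.unique h2) u)
  have hvu := key v u
  rw [← (hg.contDiffAt (x := p)).isSymmSndFDerivAt (by simp) u v] at hvu
  linarith [key u v]

theorem form_fderiv_fderiv [FiniteDimensional ℝ V] {Ω : V →ₗ[ℝ] V →ₗ[ℝ] ℝ}
    (hΩalt : ∀ x, Ω x x = 0) {P : V →ₗ[ℝ] V} (hΩP : ∀ x y, Ω (P x) y + Ω x (P y) = Ω x y)
    {g : V → V} (hg : ContDiff ℝ 2 g)
    (hinv : ∀ p v, Ω (g p - P (g p)) (fderiv ℝ g p v) = Ω (p - P p) v) (p u v : V) :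
    Ω (fderiv ℝ g p u) (fderiv ℝ g p v) = Ω u v := by
  have h := antisymm_form_fderiv_eq_of_invariant Ω.toContinuousBilinearMap
    (ContinuousLinearMap.id ℝ V - LinearMap.toContinuousLinearMap P) hg hinv p u v
  simp only [LinearMap.toContinuousBilinearMap_apply, sub_apply,
    ContinuousLinearMap.id_apply, LinearMap.coe_toContinuousLinearMap'] at h
  rwa [form_sub_proj_sub_form_sub_proj hΩP hΩalt,
    form_sub_proj_sub_form_sub_proj hΩP hΩalt] at h

theorem proj_apply_eq_apply_proj {P : V →L[ℝ] V} (hP : ∀ x, P (P x) = P x) {g : V → V}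
    (hg : ContDiff ℝ 1 g) (hfield : ∀ p, g p - P (g p) = fderiv ℝ g p (p - P p)) (z : V) :
    P (g z) = g (P z) := by
  set c : ℝ → V := fun t => P z + t • (z - P z)
  have hPc : ∀ t, c t - P (c t) = t • (z - P z) := fun t => by
    simp only [c, map_add, map_smul, map_sub, hP, sub_self, smul_zero, add_zero,
      add_sub_cancel_left]
  have hc : ∀ t, HasDerivAt c (z - P z) t := fun t => by
    simpa only [one_smul] using ((hasDerivAt_id' t).smul_const (z - P z)).const_add (P z)
  have hφ : ∀ t, HasDerivAt (fun t => P (g (c t))) (P (fderiv ℝ g (c t) (z - P z))) t :=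
    fun t => P.hasFDerivAt.comp_hasDerivAt t
      (((hg.differentiable one_ne_zero) (c t)).hasFDerivAt.comp_hasDerivAt t (hc t))
  have hφ' : Continuous fun t => P (fderiv ℝ g (c t) (z - P z)) := by
    have := hg.continuous_fderiv one_ne_zero
    fun_prop
  have hvert : ∀ t ≠ 0, P (fderiv ℝ g (c t) (z - P z)) = 0 := fun t ht => by
    have h := congrArg P (hfield (c t))
    rw [map_sub, hP, sub_self, hPc, map_smul, map_smul] at h
    exact (smul_eq_zero.1 h.symm).resolve_left ht
  have hfix : P (g (P z)) = g (P z) := by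
    have h := hfield (P z)
    rw [hP, sub_self, map_zero, sub_eq_zero] at h
    exact h.symm
  simpa [c, hfix] using eq_of_hasDerivAt_of_eq_zero_of_ne_zero hφ hφ' hvert 1 0

theorem proj_fderiv_eq_fderiv_proj (P : V →L[ℝ] V) {g : V → V} (hg : Differentiable ℝ g)
    (hcomm : ∀ z, P (g z) = g (P z)) (z y : V) :
    P (fderiv ℝ g z y) = fderiv ℝ g (P z) (P y) := by
  have h1 := P.hasFDerivAt.comp z (hg z).hasFDerivAt
  have h2 := (hg (P z)).hasFDerivAt.comp z P.hasFDerivAt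
  rw [show P ∘ g = g ∘ P from funext hcomm] at h1
  exact congr($(h1.unique h2) y)

theorem Fmap_apply [FiniteDimensional ℝ V] {Vp : Submodule ℝ V} {P : V →ₗ[ℝ] V}
    (hPr : ∀ z, P z ∈ Vp) (hPp : ∀ x ∈ Vp, P x = x) {g : V → V} {f : Vp → Vp}
    (hfg : ∀ x : Vp, (f x : V) = g x) (z : V) (hg : DifferentiableAt ℝ g (P z)) (y : V) :
    Fmap Vp P hPr f z y = P (fderiv ℝ g (P z) (P y)) := by
  set Pc := LinearMap.toContinuousLinearMap (P.codRestrict Vp hPr)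
  have hf : f = fun x : Vp => Pc (g x) := funext fun x => Subtype.ext <| by
    simp [Pc, ← hfg, hPp _ (f x).2]
  have hder : HasFDerivAt f (Pc ∘L fderiv ℝ g (P z) ∘L Vp.subtypeL) ⟨P z, hPr z⟩ := by
    rw [hf]
    exact Pc.hasFDerivAt.comp _ (hg.hasFDerivAt.comp (⟨P z, hPr z⟩ : Vp) Vp.subtypeL.hasFDerivAt)
  simp [Fmap, hder.fderiv, Pc]

end Calculus

theorem stmt_15_general {V : Type*} [NormedAddCommGroup V] [NormedSpace ℝ V] [FiniteDimensional ℝ V]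
    (Ω : V →ₗ[ℝ] V →ₗ[ℝ] ℝ)
    (hΩalt : ∀ x : V, Ω x x = 0)
    (hΩnd : ∀ x : V, (∀ y : V, Ω x y = 0) → x = 0)
    (A : V →ₗ[ℝ] V) (hA : ∀ x y : V, Ω (A x) y + Ω x (A y) = 0)
    (hA2 : A ∘ₗ A = LinearMap.id)
    (P : V →ₗ[ℝ] V) (hPr : ∀ z : V, P z ∈ LinearMap.ker (A - LinearMap.id))
    (hPp : ∀ x ∈ LinearMap.ker (A - LinearMap.id), P x = x)
    (hPm : ∀ x ∈ LinearMap.ker (A + LinearMap.id), P x = 0)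
    (g : V → V) (hg : ContDiff ℝ (⊤ : ℕ∞) g)
    (hpres : ∀ z v : V, Ω (g z - A (g z)) (fderiv ℝ g z v) = Ω (z - A z) v)
    (f : LinearMap.ker (A - LinearMap.id) → LinearMap.ker (A - LinearMap.id))
    (hfg : ∀ x : LinearMap.ker (A - LinearMap.id), (f x : V) = g x) :
    ∀ z : V,
      g z - (f ⟨P z, hPr z⟩ : V) ∈ LinearMap.ker (A + LinearMap.id) ∧
      ∀ Fdag : V →ₗ[ℝ] V,
        (∀ x y : V, Ω (Fdag x) y = Ω x (Fmap (LinearMap.ker (A - LinearMap.id)) P hPr f z y)) →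
        Fdag (g z - (f ⟨P z, hPr z⟩ : V)) = z - P z := by
  have hAP := apply_eq_proj_add_proj_sub hA2 hPp hPm
  have hP : ∀ x, P (P x) = P x := fun x => hPp _ (hPr x)
  have hΩP := form_proj_add_form_proj hA hAP
  have hg2 : ContDiff ℝ 2 g := hg.of_le (by norm_cast)
  have hinv : ∀ p v, Ω (g p - P (g p)) (fderiv ℝ g p v) = Ω (p - P p) v := fun p v => by
    have h := hpres p v
    simp only [hAP, map_add, map_sub, LinearMap.add_apply, LinearMap.sub_apply] at h ⊢
    linarith
  have hfield : ∀ p, g p - P (g p) = fderiv ℝ g p (p - P p) := fun p =>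
    eq_apply_of_form_apply_eq hΩnd (form_fderiv_fderiv hΩalt hΩP hg2 hinv p) (hinv p)
  have hg1 : Differentiable ℝ g := hg2.differentiable two_ne_zero
  have hcomm : ∀ z, P (g z) = g (P z) :=
    proj_apply_eq_apply_proj (P := LinearMap.toContinuousLinearMap P) hP
      (hg2.of_le (by norm_num)) hfield
  intro z
  have hw : g z - (f ⟨P z, hPr z⟩ : V) = g z - P (g z) := by rw [hfg, ← hcomm]
  refine ⟨?_, fun Fdag hFdag => sub_eq_zero.1 (hΩnd _ fun y => ?_)⟩
  · rw [hw, LinearMap.mem_ker, LinearMap.add_apply, hAP, map_sub, hP]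
    simp
  · have hDcomm : P (fderiv ℝ g z y) = fderiv ℝ g (P z) (P y) :=
      proj_fderiv_eq_fderiv_proj (LinearMap.toContinuousLinearMap P) hg1 hcomm z y
    have hF : Fmap _ P hPr f z y = P (fderiv ℝ g z y) := by
      rw [Fmap_apply hPr hPp hfg z (hg1 _), ← hDcomm, hP]
    rw [map_sub, LinearMap.sub_apply, hFdag, hF, hw, form_sub_proj_proj hΩP hP, hinv, sub_self]

/-- Let `A ∈ sp(V, Ω)` satisfy `A² = +I`, with `V₊ = ker(A − I)`,
`V₋ = ker(A + I)`, projection `P₊` onto `V₊` along `V₋` and `P₋ = I − P₊`. If the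
smooth diffeomorphism `g` preserves `θ^A` and `f := g|_{V₊} : V₊ → V₊` denotes its
restriction, then `g` is recovered from `f` by the formula
`g(z) = f(z₊) + [((Df_{z₊} ∘ P₊)†)|_{V₋}]⁻¹(z₋)`; equivalently, `g(z) − f(z₊)` lies in
`V₋` and is carried by the symplectic adjoint `(Df_{z₊} ∘ P₊)†` (a linear automorphism
of `V₋`) to `z₋ = z − P₊(z)`. -/
theorem stmt_15 {V : Type*} [NormedAddCommGroup V] [NormedSpace ℝ V] [FiniteDimensional ℝ V]
    (Ω : V →ₗ[ℝ] V →ₗ[ℝ] ℝ)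
    (hΩalt : ∀ x : V, Ω x x = 0)
    (hΩnd : ∀ x : V, (∀ y : V, Ω x y = 0) → x = 0)
    (A : V →ₗ[ℝ] V) (hA : ∀ x y : V, Ω (A x) y + Ω x (A y) = 0)
    (hA2 : A ∘ₗ A = LinearMap.id)
    (P : V →ₗ[ℝ] V) (hPr : ∀ z : V, P z ∈ LinearMap.ker (A - LinearMap.id))
    (hPp : ∀ x ∈ LinearMap.ker (A - LinearMap.id), P x = x)
    (hPm : ∀ x ∈ LinearMap.ker (A + LinearMap.id), P x = 0)
    (g ginv : V → V) (hg : ContDiff ℝ (⊤ : ℕ∞) g) (hginv : ContDiff ℝ (⊤ : ℕ∞) ginv)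
    (hli : Function.LeftInverse ginv g) (hri : Function.RightInverse ginv g)
    (hpres : ∀ z v : V, Ω (g z - A (g z)) (fderiv ℝ g z v) = Ω (z - A z) v)
    (f : LinearMap.ker (A - LinearMap.id) → LinearMap.ker (A - LinearMap.id))
    (hfg : ∀ x : LinearMap.ker (A - LinearMap.id), (f x : V) = g x) :
    ∀ z : V,
      g z - (f ⟨P z, hPr z⟩ : V) ∈ LinearMap.ker (A + LinearMap.id) ∧
      ∀ Fdag : V →ₗ[ℝ] V,
        (∀ x y : V, Ω (Fdag x) y = Ω x (Fmap (LinearMap.ker (A - LinearMap.id)) P hPr f z y)) →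
        Fdag (g z - (f ⟨P z, hPr z⟩ : V)) = z - P z :=
  stmt_15_general Ω hΩalt hΩnd A hA hA2 P hPr hPp hPm g hg hpres f hfg
end

section
/- Let A: V → V be a linear map with A² = 0 on a finite-dimensional real vector space V, and let g: V → V be a smooth diffeomorphism satisfying the flow-equivariance condition g(eᵗ(z − tAz)) = eᵗ(g(z) − tA(g(z))) for all t ∈ ℝ and z ∈ V. Then g(0) = 0, g equals its derivative at the origin (so g is linear), and g commutes with A. -/
/-!
Differentiating `g ∘ φ_t = φ_t ∘ g` gives `Dg z - Dg 0 = φ_t⁻¹ ∘ (Dg (φ_t z) - Dg 0) ∘ φ_t`.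
As `t → -∞`, `φ_t z → 0` like `eᵗ · poly(t)` and `Dg` is Lipschitz near `0`, while
`‖φ_t⁻¹‖ ‖φ_t‖` grows only polynomially in `t`; hence `Dg` is constant. Since `A` is nilpotent,
`0` is the only fixed point of `φ_1`, so `g 0 = 0` and `g = Dg 0`, and the linearised
equivariance at `t = 1` makes `Dg 0` commute with `A`.
-/

open Filter Topology Real

theorem tendsto_exp_mul_one_add_abs_mul_pow_atBot (c : ℝ) (k : ℕ) :
    Tendsto (fun t => exp t * (1 + |t| * c) ^ k) atBot (𝓝 0) := by
  refine ((Polynomial.tendsto_div_exp_atTop ((1 + Polynomial.X * Polynomial.C c) ^ k)).comp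
    tendsto_neg_atBot_atTop).congr' ?_
  filter_upwards [eventually_le_atBot 0] with t ht
  simp only [Function.comp_apply, Polynomial.eval_pow, Polynomial.eval_add, Polynomial.eval_one,
    Polynomial.eval_mul, Polynomial.eval_X, Polynomial.eval_C, abs_of_nonpos ht, exp_neg,
    div_inv_eq_mul, mul_comm]

theorem fderiv_comp_eq_comp_fderiv_of_commute {𝕜 E : Type*} [NontriviallyNormedField 𝕜]
    [NormedAddCommGroup E] [NormedSpace 𝕜 E] {g : E → E} {L : E →L[𝕜] E}
    (hg : Differentiable 𝕜 g) (h : Function.Commute g L) (z : E) :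
    (fderiv 𝕜 g (L z)).comp L = L.comp (fderiv 𝕜 g z) := by
  have hleft := fderiv_comp z (hg (L z)) L.differentiableAt
  have hright := fderiv_comp z L.differentiableAt (hg z)
  rw [L.fderiv] at hleft hright
  have hcomp : g ∘ L = L ∘ g := funext h
  rw [← hleft, ← hright, hcomp]

theorem eq_zero_of_smul_eq_self {R M : Type*} [DivisionRing R] [AddCommGroup M] [Module R M]
    {c : R} {x : M} (hc : c ≠ 1) (h : c • x = x) : x = 0 := by
  have hsub : (c - 1) • x = 0 := by rw [sub_smul, one_smul, h, sub_self]
  exact (smul_eq_zero.mp hsub).resolve_left (sub_ne_zero.mpr hc)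

section LiouvilleFlow

variable {V : Type*} [NormedAddCommGroup V] [NormedSpace ℝ V] (A : V →L[ℝ] V)

/-- For `A ∘ A = 0` this is `exp (t • (1 - A))`, the paper's `φ^A_{2t}`. -/
noncomputable def liouvilleFlow (t : ℝ) : V →L[ℝ] V :=
  exp t • (ContinuousLinearMap.id ℝ V - t • A)

@[simp]
theorem liouvilleFlow_apply (t : ℝ) (v : V) : liouvilleFlow A t v = exp t • (v - t • A v) :=
  rfl

variable {A}

theorem liouvilleFlow_neg_comp (hA : A.comp A = 0) (t : ℝ) :
    (liouvilleFlow A (-t)).comp (liouvilleFlow A t) = ContinuousLinearMap.id ℝ V := by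
  ext v
  have hAA : A (A v) = 0 := congr($hA v)
  simp only [ContinuousLinearMap.comp_apply, liouvilleFlow_apply, map_smul, map_sub, hAA,
    ContinuousLinearMap.id_apply, smul_zero, sub_zero, smul_sub, smul_smul, neg_smul,
    sub_neg_eq_add, exp_neg]
  match_scalars <;> simp [field]

theorem norm_liouvilleFlow_le (t : ℝ) : ‖liouvilleFlow A t‖ ≤ exp t * (1 + |t| * ‖A‖) := by
  calc ‖liouvilleFlow A t‖ = exp t * ‖ContinuousLinearMap.id ℝ V - t • A‖ := by
        rw [liouvilleFlow, norm_smul, norm_of_nonneg (exp_pos t).le]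
    _ ≤ exp t * (1 + |t| * ‖A‖) := by
        gcongr
        refine (norm_sub_le _ _).trans ?_
        rw [norm_smul, norm_eq_abs]
        gcongr
        exact ContinuousLinearMap.norm_id_le

theorem tendsto_liouvilleFlow_apply_atBot (z : V) :
    Tendsto (fun t => liouvilleFlow A t z) atBot (𝓝 0) := by
  have hbound := (tendsto_exp_mul_one_add_abs_mul_pow_atBot ‖A‖ 1).mul_const ‖z‖
  rw [zero_mul] at hbound
  refine squeeze_zero_norm (fun t => ?_) hbound
  rw [pow_one]
  exact (liouvilleFlow A t).le_of_opNorm_le (norm_liouvilleFlow_le t) z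

theorem eq_zero_of_liouvilleFlow_apply_eq (hA : A.comp A = 0) {t : ℝ} (ht : t ≠ 0) {v : V}
    (hv : liouvilleFlow A t v = v) : v = 0 := by
  have hexp : exp t ≠ 1 := by simpa using ht
  have hAv : A v = 0 := by
    have h := congr(A $hv)
    have hAA : A (A v) = 0 := congr($hA v)
    simp only [liouvilleFlow_apply, map_smul, map_sub, hAA, smul_zero, sub_zero] at h
    exact eq_zero_of_smul_eq_self hexp h
  simp only [liouvilleFlow_apply, hAv, smul_zero, sub_zero] at hv
  exact eq_zero_of_smul_eq_self hexp hv

theorem comp_eq_comp_of_comp_liouvilleFlow_eq {t : ℝ} (ht : t ≠ 0) {L : V →L[ℝ] V}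
    (hL : L.comp (liouvilleFlow A t) = (liouvilleFlow A t).comp L) : L.comp A = A.comp L := by
  ext v
  have h := congr($hL v)
  simp only [ContinuousLinearMap.comp_apply, liouvilleFlow_apply, map_smul, map_sub] at h
  exact smul_right_injective V ht (sub_right_inj.mp (smul_right_injective V (exp_ne_zero t) h))

open ContinuousLinearMap in
theorem fderiv_eq_fderiv_zero_of_commute_liouvilleFlow (hA : A.comp A = 0) {g : V → V}
    (hg : ContDiff ℝ 2 g) (hcomm : ∀ t, Function.Commute g (liouvilleFlow A t)) (z : V) :
    fderiv ℝ g z = fderiv ℝ g 0 := by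
  set φ := liouvilleFlow A
  set Dg := fderiv ℝ g
  have hdiff : Differentiable ℝ g := hg.differentiable two_ne_zero
  obtain ⟨K, U, hU, hLip⟩ :=
    (hg.fderiv_right one_add_one_eq_two.le).contDiffAt.exists_lipschitzOnWith (x := (0 : V))
  have hconj : ∀ t, Dg z - Dg 0 = (φ (-t)).comp ((Dg (φ t z) - Dg 0).comp (φ t)) := by
    intro t
    have hz := fderiv_comp_eq_comp_fderiv_of_commute hdiff (hcomm t) z
    have h0 := fderiv_comp_eq_comp_fderiv_of_commute hdiff (hcomm t) 0
    rw [map_zero] at h0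
    rw [sub_comp, hz, h0, ← comp_sub, ← comp_assoc, liouvilleFlow_neg_comp hA, id_comp]
  have hbound : ∀ᶠ t in atBot,
      ‖Dg z - Dg 0‖ ≤ K * ‖z‖ * (exp t * (1 + |t| * ‖A‖) ^ 3) := by
    filter_upwards [tendsto_liouvilleFlow_apply_atBot z hU] with t ht
    have hφ := norm_liouvilleFlow_le (A := A) t
    have hφneg := norm_liouvilleFlow_le (A := A) (-t)
    rw [abs_neg] at hφneg
    have hDg : ‖Dg (φ t z) - Dg 0‖ ≤ K * (exp t * (1 + |t| * ‖A‖) * ‖z‖) := by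
      refine (hLip.norm_sub_le ht (mem_of_mem_nhds hU)).trans ?_
      rw [sub_zero]
      gcongr
      exact (φ t).le_of_opNorm_le hφ z
    calc ‖Dg z - Dg 0‖ ≤ ‖φ (-t)‖ * (‖Dg (φ t z) - Dg 0‖ * ‖φ t‖) := by
          rw [hconj t]
          exact (opNorm_comp_le _ _).trans (by gcongr; exact opNorm_comp_le _ _)
      _ ≤ (exp (-t) * (1 + |t| * ‖A‖)) *
            ((K * (exp t * (1 + |t| * ‖A‖) * ‖z‖)) * (exp t * (1 + |t| * ‖A‖))) := by
          gcongr
      _ = K * ‖z‖ * (exp t * (1 + |t| * ‖A‖) ^ 3) := by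
          rw [exp_neg]
          field_simp
  have hlim := (tendsto_exp_mul_one_add_abs_mul_pow_atBot ‖A‖ 3).const_mul (K * ‖z‖)
  rw [mul_zero] at hlim
  exact sub_eq_zero.mp (norm_le_zero_iff.mp (ge_of_tendsto hlim hbound))

end LiouvilleFlow

theorem stmt_18_general {V : Type*} [NormedAddCommGroup V] [NormedSpace ℝ V] [FiniteDimensional ℝ V]
    (A : V →ₗ[ℝ] V) (hA2 : A ∘ₗ A = 0)
    (g : V → V) (hg : ContDiff ℝ (⊤ : ℕ∞) g)
    (hflow : ∀ (t : ℝ) (z : V),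
      g (Real.exp t • (z - t • A z)) = Real.exp t • (g z - t • A (g z))) :
    g 0 = 0 ∧ (∀ z : V, g z = fderiv ℝ g 0 z) ∧ ∀ z : V, g (A z) = A (g z) := by
  set A' : V →L[ℝ] V := LinearMap.toContinuousLinearMap A
  have hA : A'.comp A' = 0 := by
    ext v
    exact congr($hA2 v)
  have hcomm : ∀ t, Function.Commute g (liouvilleFlow A' t) := hflow
  have hg2 : ContDiff ℝ 2 g := hg.of_le (WithTop.coe_le_coe.mpr le_top)
  have hdiff : Differentiable ℝ g := hg2.differentiable two_ne_zero
  have hg0 : g 0 = 0 := by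
    refine eq_zero_of_liouvilleFlow_apply_eq hA one_ne_zero ?_
    rw [← hcomm 1 0, map_zero]
  have hlin : g = fderiv ℝ g 0 :=
    eq_of_fderiv_eq hdiff (fderiv ℝ g 0).differentiable
      (fun z => by rw [(fderiv ℝ g 0).fderiv,
        fderiv_eq_fderiv_zero_of_commute_liouvilleFlow hA hg2 hcomm z]) 0
      (by rw [hg0, map_zero])
  have hDg0 := fderiv_comp_eq_comp_fderiv_of_commute hdiff (hcomm 1) 0
  rw [map_zero] at hDg0
  have hAcomm := comp_eq_comp_of_comp_liouvilleFlow_eq one_ne_zero hDg0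
  refine ⟨hg0, fun z => congrFun hlin z, fun z => ?_⟩
  rw [hlin]
  exact congr($hAcomm z)

/-- Let `A : V → V` be linear with `A² = 0` and let the smooth diffeomorphism
`g : V → V` satisfy the flow-equivariance `g(eᵗ(z − tAz)) = eᵗ(g(z) − tA(g(z)))` for all
`t ∈ ℝ`, `z ∈ V`. Then `g(0) = 0`, `g` equals its derivative at the origin (so `g` is
linear), and `g` commutes with `A`. -/
theorem stmt_18 {V : Type*} [NormedAddCommGroup V] [NormedSpace ℝ V] [FiniteDimensional ℝ V]
    (A : V →ₗ[ℝ] V) (hA2 : A ∘ₗ A = 0)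
    (g ginv : V → V) (hg : ContDiff ℝ (⊤ : ℕ∞) g) (hginv : ContDiff ℝ (⊤ : ℕ∞) ginv)
    (hli : Function.LeftInverse ginv g) (hri : Function.RightInverse ginv g)
    (hflow : ∀ (t : ℝ) (z : V),
      g (Real.exp t • (z - t • A z)) = Real.exp t • (g z - t • A (g z))) :
    g 0 = 0 ∧ (∀ z : V, g z = fderiv ℝ g 0 z) ∧ ∀ z : V, g (A z) = A (g z) :=
  stmt_18_general A hA2 g hg hflow
end
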